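/- arXiv:1902.02139 — 5 statements merged into one kernel-verified Lean document; each statement's English description precedes it below -/
import Mathlib

section
/- There exists a constant C such that for every n ≥ 1 and every finite set Q with |Q| = n, the number of ranked slices over Q is at most C · (n!)². (Consequently, any transition-based deterministic parity automaton all of whose states are ranked slices over Q, as produced by the Muller-Schupp or the unified determinization construction, has at most C · (n!)² states.) -/
/-!
A ranked slice over `Q` with `k` blocks is determined by a listing of `Q` that enumerates
its blocks one after the other (followed by the uncovered states), by the set of the `k`
positions at which blocks end, a `k`-subset of `{1, …, n}`, and by its rank list, a
permutation of `[1, …, k]`. Hence there are at most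
`n! · ∑ₖ C(n, k) k! = n! · ∑ₖ n! / (n - k)! < 3 (n!)²` of them.
-/

/-- A ranked slice over `Q`, in list form: a tuple `t = (S₁, …, Sₙ)` of pairwise
disjoint nonempty subsets of `Q`, together with the list of ranks `(α 1, …, α n)`;
`α` being a bijection of `{1,…,n}` is expressed by the rank list being a permutation
of `[1,…,n]`, and `α n = 1` by the last entry being `1`. -/
def RankedSlices (Q : Type*) : Set (List (Set Q) × List ℕ) :=
  {p | (∀ T ∈ p.1, T.Nonempty) ∧ p.1.Pairwise Disjoint ∧
    p.2.Perm (List.range' 1 p.1.length) ∧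
    (1 ≤ p.1.length → p.2.getLast? = some 1)}

open Finset

namespace List

variable {α : Type*}

theorem splitLengths_map_length_flatten_append (L : List (List α)) (r : List α) :
    (L.map length).splitLengths (L.flatten ++ r) = L := by
  induction L with
  | nil => rfl
  | cons l L ih => simp [splitLengths_cons, ih]

theorem eq_of_flatten_append_eq {L₁ L₂ : List (List α)} {r₁ r₂ : List α}
    (h : L₁.flatten ++ r₁ = L₂.flatten ++ r₂) (hl : L₁.map length = L₂.map length) :
    L₁ = L₂ := by
  rw [← splitLengths_map_length_flatten_append L₁ r₁, h, hl,
    splitLengths_map_length_flatten_append]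

theorem partialSums_eq_zero_cons_tail (s : List ℕ) :
    s.partialSums = 0 :: s.partialSums.tail := by
  cases s <;> simp [partialSums_cons]

theorem partialSums_injective : Function.Injective (partialSums : List ℕ → List ℕ)
  | [], [], _ => rfl
  | [], _ :: _, h | _ :: _, [], h => by simpa using congrArg length h
  | a :: s, b :: t, h => by
    rw [partialSums_cons, partialSums_cons, partialSums_eq_zero_cons_tail s,
      partialSums_eq_zero_cons_tail t] at h
    simp only [map_cons, cons.injEq, add_zero, true_and] at h
    obtain ⟨rfl, h⟩ := h
    have hst : s.partialSums = t.partialSums := by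
      rw [partialSums_eq_zero_cons_tail s, partialSums_eq_zero_cons_tail t,
        map_injective_iff.2 (add_right_injective a) h]
    rw [partialSums_injective hst]

theorem le_sum_of_mem_partialSums {s : List ℕ} {y : ℕ} (hy : y ∈ s.partialSums) :
    y ≤ s.sum := by
  obtain ⟨i, hi, rfl⟩ := mem_iff_getElem.1 hy
  rw [getElem_partialSums]
  exact (take_sublist i s).sum_le_sum fun _ _ => Nat.zero_le _

theorem pairwise_lt_partialSums : ∀ {s : List ℕ}, (∀ x ∈ s, 0 < x) →
    s.partialSums.Pairwise (· < ·)
  | [], _ => by simp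
  | a :: s, hs => by
    have ha := hs a mem_cons_self
    have ih := pairwise_lt_partialSums fun x hx => hs x (mem_cons_of_mem a hx)
    rw [partialSums_cons]
    refine pairwise_cons.2 ⟨?_, ih.map _ fun _ _ => by omega⟩
    simp only [mem_map]
    rintro _ ⟨z, -, rfl⟩
    omega

theorem tail_partialSums_toFinset_mem_powersetCard {s : List ℕ} {n : ℕ}
    (hs : ∀ x ∈ s, 0 < x) (hn : s.sum ≤ n) :
    s.partialSums.tail.toFinset ∈ (Icc 1 n).powersetCard s.length := by
  have hlt := pairwise_lt_partialSums hs
  rw [partialSums_eq_zero_cons_tail, pairwise_cons] at hlt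
  refine mem_powersetCard.2 ⟨fun y hy => ?_, ?_⟩
  · rw [mem_toFinset] at hy
    have := le_sum_of_mem_partialSums (mem_of_mem_tail hy)
    have := hlt.1 y hy
    rw [mem_Icc]
    omega
  · rw [toFinset_card_of_nodup hlt.2.nodup, length_tail, length_partialSums,
      Nat.add_sub_cancel]

theorem eq_of_tail_partialSums_toFinset_eq {s t : List ℕ} (hs : ∀ x ∈ s, 0 < x)
    (ht : ∀ x ∈ t, 0 < x) (h : s.partialSums.tail.toFinset = t.partialSums.tail.toFinset) :
    s = t := by
  have hst : s.partialSums.tail = t.partialSums.tail :=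
    ((pairwise_lt_partialSums hs).sublist (tail_sublist _)).eq_of_mem_iff
      ((pairwise_lt_partialSums ht).sublist (tail_sublist _))
      fun y => by rw [← mem_toFinset, h, mem_toFinset]
  refine partialSums_injective ?_
  rw [partialSums_eq_zero_cons_tail, hst, ← partialSums_eq_zero_cons_tail]

theorem Nodup.append_compl_perm_toList_univ [Fintype α] [DecidableEq α]
    {l : List α} (hl : l.Nodup) : (l ++ (univ \ l.toFinset).toList).Perm univ.toList := by
  refine (perm_ext_iff_of_nodup (hl.append (nodup_toList _) ?_) (nodup_toList _)).2
    fun x => ?_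
  · intro x hx hx'
    simp_all
  · by_cases hx : x ∈ l <;> simp [hx]

end List

theorem card_toFinset_permutations_toList_univ_le (α : Type*) [Fintype α] [DecidableEq α] :
    #(univ : Finset α).toList.permutations.toFinset ≤ (Fintype.card α).factorial := by
  refine (List.toFinset_card_le _).trans ?_
  rw [List.length_permutations, length_toList, card_univ]

open Nat in
theorem Nat.sum_range_descFactorial_lt_three_mul_factorial :
    ∀ n : ℕ, ∑ k ∈ range (n + 1), n.descFactorial k < 3 * n !
  | 0 => by decide
  | 1 => by decide
  | n + 2 => by
    have ih := sum_range_descFactorial_lt_three_mul_factorial (n + 1)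
    rw [sum_range_succ', factorial_succ (n + 1)]
    simp only [succ_descFactorial_succ, descFactorial_zero, ← mul_sum]
    nlinarith

namespace RankedSlices

variable {Q : Type*} [Fintype Q]

def cutRankCodes (n : ℕ) : Finset (Finset ℕ × List ℕ) :=
  (range (n + 1)).biUnion fun k =>
    (Icc 1 n).powersetCard k ×ˢ (List.range' 1 k).permutations.toFinset

theorem card_cutRankCodes_le (n : ℕ) :
    #(cutRankCodes n) ≤ ∑ k ∈ range (n + 1), n.descFactorial k := by
  refine card_biUnion_le.trans (sum_le_sum fun k _ => ?_)
  rw [card_product, card_powersetCard, Nat.card_Icc, Nat.add_sub_cancel,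
    Nat.descFactorial_eq_factorial_mul_choose, mul_comm k.factorial]
  refine Nat.mul_le_mul_left _
    ((List.toFinset_card_le (List.range' 1 k).permutations).trans ?_)
  rw [List.length_permutations, List.length_range']

noncomputable def blockLists (t : List (Set Q)) : List (List Q) :=
  t.map fun S => S.toFinite.toFinset.toList

theorem blockLists_injective : Function.Injective (blockLists (Q := Q)) :=
  List.map_injective_iff.2 fun S T h => Set.ext fun x => by
    simpa using congrArg (x ∈ ·) h

theorem nodup_flatten_blockLists {t : List (Set Q)} (ht : t.Pairwise Disjoint) :
    (blockLists t).flatten.Nodup := by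
  refine List.nodup_flatten.2 ⟨?_, ht.map _ fun S T hST => ?_⟩
  · simp only [blockLists, List.mem_map]
    rintro _ ⟨S, -, rfl⟩
    exact nodup_toList _
  · exact List.disjoint_left.2 fun x hS hT => Set.disjoint_left.1 hST (by simpa using hS)
      (by simpa using hT)

theorem pos_of_mem_map_length_blockLists {t : List (Set Q)} (ht : ∀ S ∈ t, S.Nonempty) :
    ∀ x ∈ (blockLists t).map List.length, 0 < x := by
  simp only [blockLists, List.map_map, List.mem_map, Function.comp_apply]
  rintro _ ⟨S, hS, rfl⟩
  obtain ⟨x, hx⟩ := ht S hS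
  exact List.length_pos_of_mem (by simpa using hx)

variable [DecidableEq Q]

noncomputable def encode (p : List (Set Q) × List ℕ) : List Q × Finset ℕ × List ℕ :=
  ((blockLists p.1).flatten ++ (univ \ (blockLists p.1).flatten.toFinset).toList,
    ((blockLists p.1).map List.length).partialSums.tail.toFinset, p.2)

theorem encode_mem {p : List (Set Q) × List ℕ} (hp : p ∈ RankedSlices Q) :
    encode p ∈
      (univ : Finset Q).toList.permutations.toFinset ×ˢ cutRankCodes (Fintype.card Q) := by
  obtain ⟨hne, hdisj, hperm, -⟩ := hp
  have hnodup := nodup_flatten_blockLists hdisj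
  have hcut := List.tail_partialSums_toFinset_mem_powersetCard
    (pos_of_mem_map_length_blockLists hne)
    ((List.length_flatten (L := blockLists p.1)) ▸ hnodup.length_le_card)
  simp only [List.length_map, blockLists] at hcut
  refine mem_product.2 ⟨List.mem_toFinset.2 (List.mem_permutations.2
    hnodup.append_compl_perm_toList_univ),
    mem_biUnion.2 ⟨p.1.length, ?_, mem_product.2 ⟨hcut, ?_⟩⟩⟩
  · have := powersetCard_nonempty.1 ⟨_, hcut⟩
    rw [Nat.card_Icc] at this
    exact mem_range.2 (by omega)
  · exact List.mem_toFinset.2 (List.mem_permutations.2 hperm)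

theorem encode_injOn : Set.InjOn (encode (Q := Q)) (RankedSlices Q) := by
  intro p hp q hq h
  simp only [encode, Prod.mk.injEq] at h
  obtain ⟨hflat, hcut, hrank⟩ := h
  have hlen := List.eq_of_tail_partialSums_toFinset_eq (pos_of_mem_map_length_blockLists hp.1)
    (pos_of_mem_map_length_blockLists hq.1) hcut
  exact Prod.ext (blockLists_injective (List.eq_of_flatten_append_eq hflat hlen)) hrank

theorem ncard_le_factorial_mul_sum_descFactorial :
    (RankedSlices Q).ncard ≤ (Fintype.card Q).factorial *
      ∑ k ∈ range (Fintype.card Q + 1), (Fintype.card Q).descFactorial k := by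
  calc (RankedSlices Q).ncard
      ≤ #((univ : Finset Q).toList.permutations.toFinset ×ˢ cutRankCodes (Fintype.card Q)) :=
        (Set.ncard_le_ncard_of_injOn encode (fun p hp => mem_coe.2 (encode_mem hp)) encode_injOn
          (finite_toSet _)).trans_eq (Set.ncard_coe_finset _)
    _ ≤ _ := by
        rw [card_product]
        exact Nat.mul_le_mul (card_toFinset_permutations_toList_univ_le Q)
          (card_cutRankCodes_le _)

end RankedSlices

/-- There is a constant `C` such that for every `n ≥ 1` and every
finite set `Q` with `|Q| = n`, the number of ranked slices over `Q` is at most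
`C · (n!)²`. -/
theorem rankedSlices_card_le : ∃ C : ℕ, ∀ n : ℕ, 1 ≤ n →
    ∀ (Q : Type) [Fintype Q], Fintype.card Q = n →
      (RankedSlices Q).ncard ≤ C * n.factorial ^ 2 := by
  classical
  refine ⟨3, fun n _ Q _ hQ => ?_⟩
  subst hQ
  calc (RankedSlices Q).ncard
      ≤ (Fintype.card Q).factorial * (3 * (Fintype.card Q).factorial) :=
        RankedSlices.ncard_le_factorial_mul_sum_descFactorial.trans (Nat.mul_le_mul_left _
          (Nat.sum_range_descFactorial_lt_three_mul_factorial _).le)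
    _ = 3 * (Fintype.card Q).factorial ^ 2 := by ring
end

section
/- Let A = (Q, Σ, Δ, Q₀, F) be a nondeterministic Büchi automaton with Q₀ ≠ ∅ and let w : ℕ → Σ be an infinite word. Then A accepts w if and only if the reduced split-tree t^rs(A, w) has a left-path. -/
universe u v

/-- A nondeterministic Büchi automaton over state type `Q` and alphabet `Alp`. -/
structure NBA (Q : Type u) (Alp : Type v) where
  delta : Q → Alp → Set Q
  Q0 : Set Q
  F : Set Q

namespace NBA

variable {Q : Type u} {Alp : Type v}

/-- `Δ(X, x)`: successors of a set of states. -/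
def nextSet (A : NBA Q Alp) (X : Set Q) (x : Alp) : Set Q := ⋃ q ∈ X, A.delta q x

/-- A run of the NBA on the word `w`. -/
def IsRun (A : NBA Q Alp) (w : ℕ → Alp) (q : ℕ → Q) : Prop :=
  q 0 ∈ A.Q0 ∧ ∀ i, q (i + 1) ∈ A.delta (q i) (w i)

/-- Acceptance: some run visits `F` infinitely often. -/
def Accepts (A : NBA Q Alp) (w : ℕ → Alp) : Prop :=
  ∃ q, A.IsRun w q ∧ ∀ N, ∃ i, N ≤ i ∧ q i ∈ A.F

/-- The levels of the reduced split-tree of `A` on `w`, with positions kept explicit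
(empty sets are retained as `∅`, so that position `j` of level `i` has left child
`2j - 1` and right child `2j` at level `i + 1`; the nonempty positions are exactly the
nodes of the reduced split-tree).  Level `0` is `(Q₀)` at position `1`; at level `i+1`
position `2j-1` holds the accepting and `2j` the non-accepting successors of position
`j` of level `i`, and each set is normalized by removing the states appearing at
smaller positions. -/
noncomputable def splitLvl (A : NBA Q Alp) (w : ℕ → Alp) : ℕ → ℕ → Set Q
  | 0 => fun j => if j = 1 then A.Q0 else ∅
  | i + 1 => fun j =>
      (if j % 2 = 1 then A.nextSet (splitLvl A w i ((j + 1) / 2)) (w i) ∩ A.F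
        else A.nextSet (splitLvl A w i (j / 2)) (w i) \ A.F) \
      ⋃ j' ∈ Set.Ico 1 j,
        (if j' % 2 = 1 then A.nextSet (splitLvl A w i ((j' + 1) / 2)) (w i) ∩ A.F
          else A.nextSet (splitLvl A w i (j' / 2)) (w i) \ A.F)

/-- A left-path of the reduced split-tree: an infinite sequence of (nonempty) positions,
one in each level, each a child of the previous one, taking the left child infinitely
often. -/
noncomputable def HasLeftPath (A : NBA Q Alp) (w : ℕ → Alp) : Prop :=
  ∃ p : ℕ → ℕ, p 0 = 1 ∧ (∀ i, (splitLvl A w i (p i)).Nonempty) ∧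
    (∀ i, p (i + 1) = 2 * p i - 1 ∨ p (i + 1) = 2 * p i) ∧
    (∀ N, ∃ i, N ≤ i ∧ p (i + 1) = 2 * p i - 1)

end NBA


namespace RSAux

open NBA

variable {Q : Type} {Alp : Type} (A : NBA Q Alp) (w : ℕ → Alp)

/-- The "raw" (non-normalized) set at position `j` of level `i+1`. -/
noncomputable def raw (i j : ℕ) : Set Q :=
  if j % 2 = 1 then A.nextSet (splitLvl A w i ((j + 1) / 2)) (w i) ∩ A.F
  else A.nextSet (splitLvl A w i (j / 2)) (w i) \ A.F

lemma splitLvl_succ (i j : ℕ) :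
    splitLvl A w (i + 1) j = raw A w i j \ ⋃ j' ∈ Set.Ico 1 j, raw A w i j' := rfl

lemma mem_splitLvl_succ {s : Q} {i j : ℕ} :
    s ∈ splitLvl A w (i + 1) j ↔
      s ∈ raw A w i j ∧ ∀ j', 1 ≤ j' → j' < j → s ∉ raw A w i j' := by
  rw [splitLvl_succ]
  constructor
  · rintro ⟨h1, h2⟩
    refine ⟨h1, fun j' hj1 hj2 hm => h2 ?_⟩
    exact Set.mem_biUnion (Set.mem_Ico.mpr ⟨hj1, hj2⟩) hm
  · rintro ⟨h1, h2⟩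
    refine ⟨h1, fun hm => ?_⟩
    obtain ⟨j', hj', hmem⟩ := Set.mem_iUnion₂.mp hm
    rw [Set.mem_Ico] at hj'
    exact h2 j' hj'.1 hj'.2 hmem

lemma nextSet_empty (x : Alp) : A.nextSet ∅ x = ∅ := by simp [NBA.nextSet]

lemma splitLvl_zero_pos : ∀ i, splitLvl A w i 0 = ∅ := by
  intro i
  induction i with
  | zero => simp [splitLvl]
  | succ i ih =>
    rw [splitLvl_succ, raw]
    simp [ih, nextSet_empty]

lemma one_le_of_nonempty {i j : ℕ} (h : (splitLvl A w i j).Nonempty) : 1 ≤ j := by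
  by_contra hc
  have : j = 0 := by omega
  rw [this, splitLvl_zero_pos] at h
  exact Set.not_nonempty_empty h

lemma raw_subset_next (i j : ℕ) :
    raw A w i j ⊆ A.nextSet (splitLvl A w i ((j + 1) / 2)) (w i) := by
  rw [raw]
  rcases Nat.even_or_odd j with he | ho
  · have h2 : j % 2 = 0 := Nat.even_iff.mp he
    have hdiv : j / 2 = (j + 1) / 2 := by omega
    rw [if_neg (by omega), hdiv]
    exact Set.diff_subset
  · have h2 : j % 2 = 1 := Nat.odd_iff.mp ho
    rw [if_pos h2]
    exact Set.inter_subset_left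

lemma parent_nonempty {i j : ℕ} (h : (splitLvl A w (i + 1) j).Nonempty) :
    (splitLvl A w i ((j + 1) / 2)).Nonempty := by
  obtain ⟨s, hs⟩ := h
  have h1 : s ∈ raw A w i j := ((mem_splitLvl_succ A w).mp hs).1
  have h2 := raw_subset_next A w i j h1
  simp only [NBA.nextSet, Set.mem_iUnion] at h2
  obtain ⟨q, hq, -⟩ := h2
  exact ⟨q, hq⟩

lemma mem_F_iff_odd {s : Q} {i j : ℕ} (h : s ∈ splitLvl A w (i + 1) j) :
    (s ∈ A.F ↔ j % 2 = 1) := by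
  have h1 : s ∈ raw A w i j := ((mem_splitLvl_succ A w).mp h).1
  rw [raw] at h1
  by_cases hp : j % 2 = 1
  · rw [if_pos hp] at h1
    exact ⟨fun _ => hp, fun _ => h1.2⟩
  · rw [if_neg hp] at h1
    exact ⟨fun hf => absurd hf h1.2, fun ho => absurd ho hp⟩

lemma mem_raw_child {s t : Q} {i j : ℕ} (hj : 1 ≤ j) (ht : t ∈ splitLvl A w i j)
    (hs : s ∈ A.delta t (w i)) :
    (s ∈ A.F → s ∈ raw A w i (2 * j - 1)) ∧ (s ∉ A.F → s ∈ raw A w i (2 * j)) := by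
  have hnext : s ∈ A.nextSet (splitLvl A w i j) (w i) := by
    simp only [NBA.nextSet, Set.mem_iUnion]
    exact ⟨t, ht, hs⟩
  constructor
  · intro hF
    rw [raw, if_pos (by omega : (2 * j - 1) % 2 = 1)]
    have h2 : (2 * j - 1 + 1) / 2 = j := by omega
    rw [h2]
    exact ⟨hnext, hF⟩
  · intro hF
    rw [raw, if_neg (by omega : ¬ (2 * j) % 2 = 1)]
    have h2 : 2 * j / 2 = j := by omega
    rw [h2]
    exact ⟨hnext, hF⟩

/-- Any state in the raw set at some position `c ≥ 1` appears at a position `≤ c`. -/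
lemma exists_pos_le {s : Q} {i c : ℕ} (hc : 1 ≤ c) (h : s ∈ raw A w i c) :
    ∃ j, 1 ≤ j ∧ j ≤ c ∧ s ∈ splitLvl A w (i + 1) j := by
  have hex : ∃ j, s ∈ raw A w i j := ⟨c, h⟩
  classical
  refine ⟨Nat.find hex, ?_, Nat.find_le h, ?_⟩
  · rcases Nat.eq_zero_or_pos (Nat.find hex) with h0 | h1
    · exfalso
      have := Nat.find_spec hex
      rw [h0, raw] at this
      simp only [Nat.zero_mod, if_neg (by omega : ¬ (0 % 2 = 1))] at this
      rw [(by norm_num : (0:ℕ) / 2 = 0), splitLvl_zero_pos, nextSet_empty] at this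
      exact this.1
    · exact h1
  · rw [mem_splitLvl_succ]
    exact ⟨Nat.find_spec hex, fun j' _ hlt => Nat.find_min hex hlt⟩

lemma pos_le_of_mem_raw {s : Q} {i j c : ℕ} (hs : s ∈ splitLvl A w (i + 1) j)
    (hc : 1 ≤ c) (h : s ∈ raw A w i c) : j ≤ c := by
  by_contra hcj
  exact ((mem_splitLvl_succ A w).mp hs).2 c hc (by omega) h

lemma exists_pos {ρ : ℕ → Q} (hr : A.IsRun w ρ) : ∀ i, ∃ j, ρ i ∈ splitLvl A w i j := by
  intro i
  induction i with
  | zero => exact ⟨1, by simpa [splitLvl] using hr.1⟩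
  | succ i ih =>
    obtain ⟨j, hj⟩ := ih
    have hj1 : 1 ≤ j := one_le_of_nonempty A w ⟨ρ i, hj⟩
    have hraw := mem_raw_child A w hj1 hj (hr.2 i)
    by_cases hF : ρ (i + 1) ∈ A.F
    · obtain ⟨j', _, _, hmem⟩ := exists_pos_le A w (by omega) (hraw.1 hF)
      exact ⟨j', hmem⟩
    · obtain ⟨j', _, _, hmem⟩ := exists_pos_le A w (by omega) (hraw.2 hF)
      exact ⟨j', hmem⟩

end RSAux

namespace RSAux

open NBA

variable {Q : Type} {Alp : Type} (A : NBA Q Alp) (w : ℕ → Alp)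

/-- parent position -/
def par (j : ℕ) : ℕ := (j + 1) / 2

lemma par_mono : Monotone par := fun a b h => Nat.div_le_div_right (by omega)

lemma forward (A : NBA Q Alp) (w : ℕ → Alp) (h : A.Accepts w) : A.HasLeftPath w := by
  classical
  obtain ⟨ρ, hrun, hacc⟩ := h
  -- position of the run at each level
  set P : ℕ → ℕ := fun i => Classical.choose (exists_pos A w hrun i) with hPdef
  have hP : ∀ i, ρ i ∈ splitLvl A w i (P i) := fun i => Classical.choose_spec (exists_pos A w hrun i)
  have hP1 : ∀ i, 1 ≤ P i := fun i => one_le_of_nonempty A w ⟨ρ i, hP i⟩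
  have hstep : ∀ i, P (i + 1) ≤ 2 * P i := by
    intro i
    have hraw := mem_raw_child A w (hP1 i) (hP i) (hrun.2 i)
    by_cases hF : ρ (i + 1) ∈ A.F
    · exact le_trans (pos_le_of_mem_raw A w (hP (i+1)) (by have := hP1 i; omega) (hraw.1 hF)) (by omega)
    · exact pos_le_of_mem_raw A w (hP (i+1)) (by have := hP1 i; omega) (hraw.2 hF)
  -- ancestors
  set anc : ℕ → ℕ → ℕ := fun i m => par^[i - m] (P i) with hancdef
  have hanc_self : ∀ i, anc i i = P i := by intro i; simp [hancdef]
  have hanc_par : ∀ i m, m < i → anc i m = par (anc i (m + 1)) := by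
    intro i m hm
    show par^[i - m] (P i) = par (par^[i - (m+1)] (P i))
    rw [(by omega : i - m = (i - (m + 1)) + 1), Function.iterate_succ_apply']
  -- ancestors come from nonempty nodes
  have hanc_ne0 : ∀ d i m, i = m + d → (splitLvl A w m (anc i m)).Nonempty := by
    intro d
    induction d with
    | zero =>
      intro i m hm
      have : m = i := by omega
      subst this
      rw [hanc_self]
      exact ⟨ρ m, hP m⟩
    | succ d ihd =>
      intro i m hm
      have hmi : m < i := by omega
      have hne := ihd i (m + 1) (by omega)
      rw [hanc_par i m hmi]
      exact parent_nonempty A w hne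
  have hanc_ne : ∀ i m, m ≤ i → (splitLvl A w m (anc i m)).Nonempty :=
    fun i m hm => hanc_ne0 (i - m) i m (by omega)
  have hanc1 : ∀ i m, m ≤ i → 1 ≤ anc i m := fun i m hm => one_le_of_nonempty A w (hanc_ne i m hm)
  -- antitone in i
  have hanc_anti1 : ∀ i m, m ≤ i → anc (i + 1) m ≤ anc i m := by
    intro i m hm
    show par^[i + 1 - m] (P (i + 1)) ≤ par^[i - m] (P i)
    rw [(by omega : i + 1 - m = (i - m) + 1), Function.iterate_succ_apply]
    have h1 : par (P (i + 1)) ≤ P i := by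
      have := hstep i
      show (P (i + 1) + 1) / 2 ≤ P i
      omega
    exact Monotone.iterate par_mono (i - m) h1
  have hanc_anti : ∀ m i i', m ≤ i → i ≤ i' → anc i' m ≤ anc i m := by
    intro m i i' hmi hii
    induction i' with
    | zero =>
      have hi0 : i = 0 := by omega
      subst hi0
      exact le_refl _
    | succ i' ih =>
      rcases Nat.lt_or_ge i (i' + 1) with hlt | hge
      · exact le_trans (hanc_anti1 i' m (by omega)) (ih (by omega))
      · have : i = i' + 1 := by omega
        subst this; exact le_refl _
  -- the limit path
  set p : ℕ → ℕ := fun m => sInf ((fun i => anc i m) '' Set.Ici m) with hpdef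
  have hp_le : ∀ m i, m ≤ i → p m ≤ anc i m := by
    intro m i hmi
    exact Nat.sInf_le ⟨i, hmi, rfl⟩
  have hp_stab : ∀ m, ∃ I, m ≤ I ∧ ∀ i, I ≤ i → anc i m = p m := by
    intro m
    have hne : ((fun i => anc i m) '' Set.Ici m).Nonempty := ⟨anc m m, m, le_refl m, rfl⟩
    obtain ⟨I, hI, hIv⟩ := Nat.sInf_mem hne
    have hIv' : anc I m = p m := hIv
    refine ⟨I, hI, fun i hi => le_antisymm ?_ (hp_le m i (le_trans hI hi))⟩
    rw [← hIv']
    exact hanc_anti m I i hI hi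
  set S : ℕ → ℕ := fun m => Classical.choose (hp_stab m) with hSdef
  have hS : ∀ m, m ≤ S m ∧ ∀ i, S m ≤ i → anc i m = p m :=
    fun m => Classical.choose_spec (hp_stab m)
  have hp_ne : ∀ m, (splitLvl A w m (p m)).Nonempty := by
    intro m
    rw [← (hS m).2 (S m) (le_refl _)]
    exact hanc_ne (S m) m (hS m).1
  have hp1 : ∀ m, 1 ≤ p m := fun m => one_le_of_nonempty A w (hp_ne m)
  have hp0 : p 0 = 1 := by
    obtain ⟨s, hs⟩ := hp_ne 0
    by_contra hne1
    rw [(show splitLvl A w 0 (p 0) = if p 0 = 1 then A.Q0 else ∅ from rfl), if_neg hne1] at hs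
    exact hs
  have hp_child : ∀ m, p (m + 1) = 2 * p m - 1 ∨ p (m + 1) = 2 * p m := by
    intro m
    set i := max (S m) (S (m + 1)) + (m + 1) with hidef
    have hi1 : S m ≤ i := by omega
    have hi2 : S (m + 1) ≤ i := by omega
    have hi3 : m + 1 ≤ i := by omega
    have e1 : anc i m = p m := (hS m).2 i hi1
    have e2 : anc i (m + 1) = p (m + 1) := (hS (m + 1)).2 i hi2
    have e3 : anc i m = par (anc i (m + 1)) := hanc_par i m (by omega)
    have h1 : (p (m + 1) + 1) / 2 = p m := by
      simp only [par] at e3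
      rw [e1, e2] at e3
      exact e3.symm
    have := hp1 (m + 1)
    have := hp1 m
    omega
  refine ⟨p, hp0, hp_ne, hp_child, ?_⟩
  -- infinitely many lefts
  intro N
  by_contra hco
  push_neg at hco
  have hright : ∀ i, N ≤ i → p (i + 1) = 2 * p i := by
    intro i hi
    rcases hp_child i with h | h
    · exact absurd h (hco i hi)
    · exact h
  set I := max (S N) N with hIdef
  have hkey : ∀ i, I ≤ i → ∀ m, N ≤ m → m ≤ i → anc i m = p m := by
    intro i hi m hm1
    induction m, hm1 using Nat.le_induction with
    | base =>
      intro _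
      exact (hS N).2 i (le_trans (le_max_left _ _) hi)
    | succ m hge ih =>
      intro hm2
      have e1 : anc i m = p m := ih (by omega)
      have e3 : anc i m = par (anc i (m + 1)) := hanc_par i m (by omega)
      have hx1 : 1 ≤ anc i (m + 1) := hanc1 i (m + 1) (by omega)
      have hx2 : p (m + 1) ≤ anc i (m + 1) := hp_le (m + 1) i (by omega)
      have hxr : p (m + 1) = 2 * p m := hright m hge
      have hpar : (anc i (m + 1) + 1) / 2 = p m := by
        simp only [par] at e3
        rw [← e3, e1]
      have := hp1 m
      omega
  obtain ⟨k, hk1, hk2⟩ := hacc (I + 1)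
  obtain ⟨i, rfl⟩ : ∃ i, k = i + 1 := ⟨k - 1, by omega⟩
  have hPp : P (i + 1) = p (i + 1) := by
    have := hkey (i + 1) (by omega) (i + 1) (by omega) (le_refl _)
    rw [← this, hanc_self]
  have hodd : P (i + 1) % 2 = 1 := (mem_F_iff_odd A w (hP (i + 1))).mp hk2
  have heven : p (i + 1) = 2 * p i := hright i (by omega)
  omega

end RSAux

namespace RSAux

open NBA

variable {Q : Type} {Alp : Type}

/-- "Good" states: states of the node of the left-path at level `m` from which
partial runs along the path of every finite length exist. -/
def GoodP (A : NBA Q Alp) (w : ℕ → Alp) (p : ℕ → ℕ) (m : ℕ) (q : Q) : Prop :=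
  ∀ n, ∃ f : ℕ → Q, f m = q ∧ (∀ k, m ≤ k → k < n → f (k + 1) ∈ A.delta (f k) (w k)) ∧
    (∀ k, m ≤ k → k ≤ n → f k ∈ splitLvl A w k (p k))

lemma backward [Fintype Q] (A : NBA Q Alp) (w : ℕ → Alp) (h : A.HasLeftPath w) :
    A.Accepts w := by
  classical
  obtain ⟨p, hp0, hpne, hpchild, hpleft⟩ := h
  have hp1 : ∀ m, 1 ≤ p m := fun m => one_le_of_nonempty A w (hpne m)
  have hpred : ∀ m s, s ∈ splitLvl A w (m + 1) (p (m + 1)) →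
      ∃ t, t ∈ splitLvl A w m (p m) ∧ s ∈ A.delta t (w m) := by
    intro m s hs
    have h1 : s ∈ raw A w m (p (m + 1)) := ((mem_splitLvl_succ A w).mp hs).1
    have h2 := raw_subset_next A w m (p (m + 1)) h1
    have h3 : (p (m + 1) + 1) / 2 = p m := by
      have := hp1 m
      rcases hpchild m with hc | hc <;> omega
    rw [h3] at h2
    simp only [NBA.nextSet, Set.mem_iUnion] at h2
    obtain ⟨t, ht, hts⟩ := h2
    exact ⟨t, ht, hts⟩
  have hFsub : ∀ m, p (m + 1) = 2 * p m - 1 →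
      splitLvl A w (m + 1) (p (m + 1)) ⊆ A.F := by
    intro m hm s hs
    have := hp1 m
    exact (mem_F_iff_odd A w hs).mpr (by omega)
  -- backward chains from any state on the path
  have chain : ∀ n, ∀ s ∈ splitLvl A w n (p n), ∃ f : ℕ → Q, f n = s ∧
      (∀ k, k < n → f (k + 1) ∈ A.delta (f k) (w k)) ∧
      (∀ k, k ≤ n → f k ∈ splitLvl A w k (p k)) := by
    intro n
    induction n with
    | zero =>
      intro s hs
      refine ⟨fun _ => s, rfl, fun k hk => absurd hk (Nat.not_lt_zero k), fun k hk => ?_⟩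
      have hk0 : k = 0 := by omega
      rw [hk0]
      exact hs
    | succ n ih =>
      intro s hs
      obtain ⟨t, ht, hts⟩ := hpred n s hs
      obtain ⟨f, hfn, hfs, hfl⟩ := ih t ht
      refine ⟨fun k => if k ≤ n then f k else s, if_neg (by omega : ¬ n + 1 ≤ n), ?_, ?_⟩
      · intro k hk
        rcases Nat.lt_or_ge k n with hlt | hge
        · simp only [if_pos (by omega : k ≤ n), if_pos (by omega : k + 1 ≤ n)]
          exact hfs k hlt
        · have hkn : k = n := by omega
          subst hkn
          simp only [if_pos (le_refl k), if_neg (by omega : ¬ k + 1 ≤ k), hfn]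
          exact hts
      · intro k hk
        by_cases hkle : k ≤ n
        · simp only [if_pos hkle]
          exact hfl k hkle
        · have hkn : k = n + 1 := by omega
          subst hkn
          simp only [if_neg hkle]
          exact hs
  -- there is a good state at level 0
  have good0 : ∃ q, q ∈ splitLvl A w 0 (p 0) ∧ GoodP A w p 0 q := by
    have hch : ∀ n : ℕ, ∃ f : ℕ → Q,
        (∀ k, k < n → f (k + 1) ∈ A.delta (f k) (w k)) ∧
        (∀ k, k ≤ n → f k ∈ splitLvl A w k (p k)) := by
      intro n
      obtain ⟨s, hs⟩ := hpne n
      obtain ⟨f, -, hfs, hfl⟩ := chain n s hs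
      exact ⟨f, hfs, hfl⟩
    choose Fc hF1 hF2 using hch
    obtain ⟨q, hq⟩ := Finite.exists_infinite_fiber (fun n => Fc n 0)
    have hinf : ((fun n => Fc n 0) ⁻¹' {q}).Infinite := Set.infinite_coe_iff.mp hq
    have hfib : ∀ n ∈ (fun n => Fc n 0) ⁻¹' {q}, Fc n 0 = q := by
      intro n hn
      simpa using hn
    refine ⟨q, ?_, ?_⟩
    · obtain ⟨n, hn, -⟩ := hinf.exists_gt 0
      have := hF2 n 0 (Nat.zero_le n)
      rwa [hfib n hn] at this
    · intro n
      obtain ⟨n', hn', hlt⟩ := hinf.exists_gt n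
      exact ⟨Fc n', hfib n' hn', fun k _ hk => hF1 n' k (by omega),
        fun k _ hk => hF2 n' k (by omega)⟩
  -- good states have good successors
  have goodstep : ∀ m q, GoodP A w p m q →
      ∃ q', q' ∈ A.delta q (w m) ∧ q' ∈ splitLvl A w (m + 1) (p (m + 1)) ∧
        GoodP A w p (m + 1) q' := by
    intro m q hG
    have hG' : ∀ n, ∃ f : ℕ → Q, f m = q ∧
        (∀ k, m ≤ k → k < n → f (k + 1) ∈ A.delta (f k) (w k)) ∧
        (∀ k, m ≤ k → k ≤ n → f k ∈ splitLvl A w k (p k)) := hG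
    choose Fc hF1 hF2 hF3 using hG'
    obtain ⟨q', hq'⟩ := Finite.exists_infinite_fiber (fun n => Fc n (m + 1))
    have hinf : ((fun n => Fc n (m + 1)) ⁻¹' {q'}).Infinite := Set.infinite_coe_iff.mp hq'
    have hfib : ∀ n ∈ (fun n => Fc n (m + 1)) ⁻¹' {q'}, Fc n (m + 1) = q' := by
      intro n hn
      simpa using hn
    obtain ⟨n0, hn0, hlt0⟩ := hinf.exists_gt (m + 1)
    refine ⟨q', ?_, ?_, ?_⟩
    · have hstep := hF2 n0 m (le_refl m) (by omega)
      rw [hF1 n0] at hstep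
      rwa [hfib n0 hn0] at hstep
    · have := hF3 n0 (m + 1) (by omega) (by omega)
      rwa [hfib n0 hn0] at this
    · intro n
      obtain ⟨n', hn', hlt⟩ := hinf.exists_gt n
      exact ⟨Fc n', hfib n' hn', fun k hk1 hk2 => hF2 n' k (by omega) (by omega),
        fun k hk1 hk2 => hF3 n' k (by omega) (by omega)⟩
  -- build the accepting run
  obtain ⟨q0, hq0L, hq0G⟩ := good0
  choose nxt hn1 hn2 hn3 using goodstep
  let G : ∀ m : ℕ, {q : Q // q ∈ splitLvl A w m (p m) ∧ GoodP A w p m q} := fun m =>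
    Nat.rec ⟨q0, hq0L, hq0G⟩
      (fun m ih => ⟨nxt m ih.1 ih.2.2, hn2 m ih.1 ih.2.2, hn3 m ih.1 ih.2.2⟩) m
  refine ⟨fun m => (G m).1, ⟨?_, ?_⟩, ?_⟩
  · have : splitLvl A w 0 (p 0) = A.Q0 := by
      rw [hp0]
      rfl
    rw [← this]
    exact (G 0).2.1
  · intro i
    exact hn1 i (G i).1 (G i).2.2
  · intro N
    obtain ⟨i, hi, hleft⟩ := hpleft N
    exact ⟨i + 1, by omega, hFsub i hleft (G (i + 1)).2.1⟩

end RSAux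


/-- An NBA `A` with nonempty initial set accepts `w` iff the reduced
split-tree `t^rs(A, w)` has a left-path. -/
theorem accepts_iff_leftPath {Q Alp : Type} [Fintype Q] (A : NBA Q Alp)
    (hQ0 : A.Q0.Nonempty) (w : ℕ → Alp) :
    A.Accepts w ↔ A.HasLeftPath w :=
  ⟨fun h => RSAux.forward A w h, fun h => RSAux.backward A w h⟩
end

section
/- For every ranked slice (α, t) over a finite set Q with n ≥ 1 sets, the rank tree of (α, t), with node i labelled Sᵢ and ranked α(i), is a valid ranked Safra tree over Q; that is: in the rank tree, every parent index carries a strictly smaller rank than each of its children, and among any two siblings the one with the smaller index carries the smaller rank. -/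
universe u

/-- A (ranked) slice: a tuple `S 1, …, S n` of subsets of `Q` together with a
ranking function `rk`.  Only the values on `{1, …, n}` are relevant. -/
structure Slice (Q : Type u) where
  n : ℕ
  S : ℕ → Set Q
  rk : ℕ → ℕ

namespace Slice

variable {Q : Type u}

/-- A valid ranked slice: the sets are nonempty and pairwise disjoint, the ranking is a
bijection of `{1,…,n}` and the last set has rank `1`. -/
def Valid (s : Slice Q) : Prop :=
  (∀ i ∈ Set.Icc 1 s.n, (s.S i).Nonempty) ∧
  (∀ i ∈ Set.Icc 1 s.n, ∀ j ∈ Set.Icc 1 s.n, i ≠ j → Disjoint (s.S i) (s.S j)) ∧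
  Set.BijOn s.rk (Set.Icc 1 s.n) (Set.Icc 1 s.n) ∧
  (1 ≤ s.n → s.rk s.n = 1)

/-- `Q_t`: union of all sets of the slice. -/
def states (s : Slice Q) : Set Q := ⋃ i ∈ Set.Icc 1 s.n, s.S i

/-- `idx q`: the (unique) index of the set containing `q`. -/
noncomputable def idx (s : Slice Q) (q : Q) : ℕ :=
  sInf {i | 1 ≤ i ∧ i ≤ s.n ∧ q ∈ s.S i}

end Slice

/-- The parent function `↑` of the rank tree of a ranked slice with `n` sets and
ranking `α`: the parent of `i` is the least index `k > i` (with `k ≤ n`) whose rank is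
smaller. -/
noncomputable def up (n : ℕ) (α : ℕ → ℕ) (i : ℕ) : ℕ :=
  sInf {k | i < k ∧ k ≤ n ∧ α k < α i}

/-- The left subtree boundary `←(i)`: the largest index `k < i` (with `k ≥ 1`) whose
rank is smaller, and `0` if there is none. -/
noncomputable def lb (α : ℕ → ℕ) (i : ℕ) : ℕ :=
  sSup {k | 1 ≤ k ∧ k < i ∧ α k < α i}

/-- For every ranked slice `(α, t)` with `n ≥ 1` sets, the rank tree
of `(α, t)`, with node `i` labelled `Sᵢ` and ranked `α(i)`, is a valid ranked Safra
tree: the labels are nonempty and pairwise disjoint, the ranking is a bijection onto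
`{1,…,n}`, every parent has a strictly smaller rank than each of its children, and
among any two siblings the one with the smaller index carries the smaller rank. -/
theorem rankTree_is_rankedSafraTree {Q : Type u} (s : Slice Q) (hs : s.Valid)
    (hn : 1 ≤ s.n) :
    (∀ i ∈ Set.Icc 1 s.n, (s.S i).Nonempty) ∧
    (∀ i ∈ Set.Icc 1 s.n, ∀ j ∈ Set.Icc 1 s.n, i ≠ j → Disjoint (s.S i) (s.S j)) ∧
    Set.BijOn s.rk (Set.Icc 1 s.n) (Set.Icc 1 s.n) ∧
    (∀ i ∈ Set.Icc 1 s.n, s.rk i ≠ 1 →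
      up s.n s.rk i ∈ Set.Icc 1 s.n ∧ i < up s.n s.rk i ∧
        s.rk (up s.n s.rk i) < s.rk i) ∧
    (∀ i ∈ Set.Icc 1 s.n, ∀ j ∈ Set.Icc 1 s.n, s.rk i ≠ 1 → s.rk j ≠ 1 →
      up s.n s.rk i = up s.n s.rk j → (i < j ↔ s.rk i < s.rk j)) := by

  obtain ⟨h1, h2, h3, h4⟩ := hs
  -- key lemma: up membership
  have key : ∀ i ∈ Set.Icc 1 s.n, s.rk i ≠ 1 →
      up s.n s.rk i ∈ {k | i < k ∧ k ≤ s.n ∧ s.rk k < s.rk i} := by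
    intro i hi hri
    have hin : i ≠ s.n := by
      intro h; exact hri (h ▸ h4 hn)
    have hlt : i < s.n := lt_of_le_of_ne hi.2 hin
    have hrange : s.rk i ∈ Set.Icc 1 s.n := h3.1 hi
    have hgt : 1 < s.rk i := lt_of_le_of_ne hrange.1 (Ne.symm hri)
    have hne : s.n ∈ {k | i < k ∧ k ≤ s.n ∧ s.rk k < s.rk i} :=
      ⟨hlt, le_refl _, by rw [h4 hn]; exact hgt⟩
    exact Nat.sInf_mem ⟨s.n, hne⟩
  refine ⟨h1, h2, h3, ?_, ?_⟩
  · intro i hi hri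
    obtain ⟨ha, hb, hc⟩ := key i hi hri
    exact ⟨⟨le_trans hi.1 (le_of_lt ha), hb⟩, ha, hc⟩
  · -- sibling order
    have main : ∀ i ∈ Set.Icc 1 s.n, ∀ j ∈ Set.Icc 1 s.n, s.rk i ≠ 1 → s.rk j ≠ 1 →
        up s.n s.rk i = up s.n s.rk j → i < j → s.rk i < s.rk j := by
      intro i hi j hj hri hrj hup hij
      by_contra hle
      push_neg at hle
      have hne : s.rk j ≠ s.rk i := fun h =>
        (ne_of_lt hij) (h3.2.1 hj hi h).symm
      have hlt : s.rk j < s.rk i := lt_of_le_of_ne hle hne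
      have hmem : j ∈ {k | i < k ∧ k ≤ s.n ∧ s.rk k < s.rk i} := ⟨hij, hj.2, hlt⟩
      have h1' : up s.n s.rk i ≤ j := Nat.sInf_le hmem
      have h2' := (key j hj hrj).1
      rw [hup] at h1'
      exact absurd h1' (not_le_of_gt h2')
    intro i hi j hj hri hrj hup
    constructor
    · exact main i hi j hj hri hrj hup
    · intro hr
      rcases lt_trichotomy i j with h | h | h
      · exact h
      · exact absurd hr (by rw [h]; exact lt_irrefl _)
      · exact absurd hr (not_lt_of_gt (main j hj i hi hrj hri hup.symm h))
end

section
/- Let (α, t) be a ranked slice with n ≥ 1 sets and let i ∈ {1,…,n}. Then the set of indices j ∈ {1,…,n} that lie in the subtree rooted at i in the rank tree of (α, t) (i.e., j = i or i is reached from j by finitely many applications of the parent function ↑) is exactly the interval {←(i)+1, ←(i)+2, …, i}. -/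
universe u

section Aux

variable {n : ℕ} {α : ℕ → ℕ}

private lemma lbBdd (i : ℕ) : BddAbove {k | 1 ≤ k ∧ k < i ∧ α k < α i} :=
  ⟨i, fun _ hk => le_of_lt hk.2.1⟩

private lemma lb_lt {i : ℕ} (hi : 1 ≤ i) : lb α i < i := by
  rcases Set.eq_empty_or_nonempty {k | 1 ≤ k ∧ k < i ∧ α k < α i} with h | h
  · simp only [lb, h, csSup_empty, Nat.bot_eq_zero]; omega
  · exact (Nat.sSup_mem h (lbBdd i)).2.1

private lemma lb_mem {i : ℕ} (h : 1 ≤ lb α i) :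
    1 ≤ lb α i ∧ lb α i < i ∧ α (lb α i) < α i := by
  rcases Set.eq_empty_or_nonempty {k | 1 ≤ k ∧ k < i ∧ α k < α i} with he | he
  · simp only [lb, he, csSup_empty, Nat.bot_eq_zero] at h; omega
  · exact Nat.sSup_mem he (lbBdd i)

private lemma le_lb {i k : ℕ} (h1 : 1 ≤ k) (h2 : k < i) (h3 : α k < α i) : k ≤ lb α i :=
  le_csSup (lbBdd i) ⟨h1, h2, h3⟩

private lemma rank_gt (hinj : Set.InjOn α (Set.Icc 1 n))
    {i j : ℕ} (hi : i ∈ Set.Icc 1 n) (h1 : lb α i < j) (h2 : j < i) : α i < α j := by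
  rw [Set.mem_Icc] at hi
  have hj : j ∈ Set.Icc 1 n := Set.mem_Icc.mpr ⟨by omega, by omega⟩
  have hne : α j ≠ α i := fun h => by
    have := hinj hj (Set.mem_Icc.mpr hi) h; omega
  rcases lt_or_gt_of_ne hne with h | h
  · have := le_lb (i := i) (by omega) h2 h; omega
  · exact h

private lemma up_mem (hmap : Set.MapsTo α (Set.Icc 1 n) (Set.Icc 1 n))
    (hinj : Set.InjOn α (Set.Icc 1 n)) (hlast : 1 ≤ n → α n = 1)
    {j : ℕ} (hj : j ∈ Set.Icc 1 n) (hjn : j ≠ n) :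
    j < up n α j ∧ up n α j ≤ n ∧ α (up n α j) < α j := by
  rw [Set.mem_Icc] at hj
  have hn : 1 ≤ n := le_trans hj.1 hj.2
  have hαj := hmap (Set.mem_Icc.mpr hj)
  rw [Set.mem_Icc] at hαj
  have hαn : α n = 1 := hlast hn
  have hαj1 : α j ≠ 1 := fun h => by
    have := hinj (Set.mem_Icc.mpr hj) (Set.mem_Icc.mpr ⟨hn, le_refl n⟩) (by omega)
    exact hjn this
  have hne : {k | j < k ∧ k ≤ n ∧ α k < α j}.Nonempty :=
    ⟨n, ⟨by omega, le_refl n, by omega⟩⟩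
  exact Nat.sInf_mem hne

private lemma up_le {j k : ℕ} (h1 : j < k) (h2 : k ≤ n) (h3 : α k < α j) :
    up n α j ≤ k :=
  Nat.sInf_le ⟨h1, h2, h3⟩

private lemma step_lt (hinj : Set.InjOn α (Set.Icc 1 n))
    {i j : ℕ} (hj : j ∈ Set.Icc 1 n) (hi : i ∈ Set.Icc 1 n)
    (hup : up n α j = i) : lb α i < j ∧ j < i := by
  rw [Set.mem_Icc] at hi hj
  have hne : {k | j < k ∧ k ≤ n ∧ α k < α j}.Nonempty := by
    by_contra h
    rw [Set.not_nonempty_iff_eq_empty] at h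
    rw [up, h, Nat.sInf_empty] at hup
    omega
  have hmem := Nat.sInf_mem hne
  rw [show sInf {k | j < k ∧ k ≤ n ∧ α k < α j} = i from hup] at hmem
  obtain ⟨hji, hin, hαi⟩ := hmem
  refine ⟨?_, hji⟩
  by_contra hle
  push_neg at hle
  have hlbi : lb α i < i := lb_lt (by omega)
  have hlb := lb_mem (i := i) (α := α) (by omega)
  rcases eq_or_lt_of_le hle with heq | hlt
  · rw [← heq] at hlb; omega
  · have h3 : up n α j ≤ lb α i := up_le hlt (by omega) (by omega)
    rw [hup] at h3; omega

private lemma lb_mono (hinj : Set.InjOn α (Set.Icc 1 n))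
    {i j : ℕ} (hi : i ∈ Set.Icc 1 n) (h1 : lb α i < j) (h2 : j ≤ i) :
    lb α i ≤ lb α j := by
  rcases eq_or_lt_of_le h2 with rfl | h2
  · exact le_refl _
  · rcases Nat.eq_zero_or_pos (lb α i) with h0 | h0
    · omega
    · have hlb := lb_mem (i := i) (α := α) h0
      have hαj : α i < α j := rank_gt hinj hi h1 h2
      exact le_lb h0 (by omega) (by omega)

end Aux

/-- In the rank tree of a ranked slice with `n ≥ 1` sets, for every
index `i ∈ {1,…,n}` the set of indices `j ∈ {1,…,n}` lying in the subtree rooted at `i`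
(i.e. `i` is reached from `j` by finitely many applications of the parent function `↑`,
all intermediate iterates being valid nodes) is exactly the interval
`{←(i)+1, …, i}`. -/

theorem subtree_eq_interval {Q : Type u} (s : Slice Q) (hs : s.Valid) (hn : 1 ≤ s.n)
    (i : ℕ) (hi : i ∈ Set.Icc 1 s.n) :
    ∀ j : ℕ,
      (j ∈ Set.Icc 1 s.n ∧
        ∃ m : ℕ, (∀ m' ≤ m, (up s.n s.rk)^[m'] j ∈ Set.Icc 1 s.n) ∧
          (up s.n s.rk)^[m] j = i)
      ↔ j ∈ Set.Icc (lb s.rk i + 1) i := by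
  obtain ⟨-, -, hbij, hlast⟩ := hs
  have hinj := hbij.injOn
  have hmap := hbij.mapsTo
  rw [Set.mem_Icc] at hi
  have forward : ∀ m j, (∀ m' ≤ m, (up s.n s.rk)^[m'] j ∈ Set.Icc 1 s.n) →
      (up s.n s.rk)^[m] j = i → lb s.rk i < j ∧ j ≤ i := by
    intro m
    induction m with
    | zero =>
      intro j _ heq
      simp only [Function.iterate_zero, id] at heq
      subst heq
      exact ⟨lb_lt (by omega), le_refl _⟩
    | succ m ih =>
      intro j hall heq
      have hj : j ∈ Set.Icc 1 s.n := by simpa using hall 0 (by omega)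
      have hall' : ∀ m' ≤ m, (up s.n s.rk)^[m'] (up s.n s.rk j) ∈ Set.Icc 1 s.n := by
        intro m' hm'
        have := hall (m' + 1) (by omega)
        rwa [Function.iterate_succ_apply] at this
      have heq' : (up s.n s.rk)^[m] (up s.n s.rk j) = i := by
        rw [← Function.iterate_succ_apply]; exact heq
      have hj'i := ih (up s.n s.rk j) hall' heq'
      have hj'Icc : (up s.n s.rk j) ∈ Set.Icc 1 s.n := by simpa using hall' 0 (by omega)
      have hstep := step_lt hinj hj hj'Icc rfl
      have hmono := lb_mono hinj (Set.mem_Icc.mpr hi) hj'i.1 hj'i.2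
      exact ⟨by omega, by omega⟩
  have backward : ∀ d j, i - j = d → lb s.rk i < j → j ≤ i →
      ∃ m, (∀ m' ≤ m, (up s.n s.rk)^[m'] j ∈ Set.Icc 1 s.n) ∧
        (up s.n s.rk)^[m] j = i := by
    intro d
    induction d using Nat.strong_induction_on with
    | _ d ih =>
      intro j hd h1 h2
      have hj : j ∈ Set.Icc 1 s.n := Set.mem_Icc.mpr ⟨by omega, by omega⟩
      rcases eq_or_lt_of_le h2 with heq | h2
      · subst heq
        refine ⟨0, fun m' hm' => ?_, by simp⟩
        obtain rfl := Nat.le_zero.mp hm'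
        simpa using hj
      · have hjn : j ≠ s.n := by omega
        have hup := up_mem hmap hinj hlast hj hjn
        have hαi : s.rk i < s.rk j := rank_gt hinj (Set.mem_Icc.mpr hi) h1 h2
        have hj'le : up s.n s.rk j ≤ i := up_le h2 hi.2 hαi
        obtain ⟨m, hall, heq⟩ := ih (i - up s.n s.rk j) (by omega) (up s.n s.rk j)
          rfl (by omega) hj'le
        refine ⟨m + 1, ?_, ?_⟩
        · intro m' hm'
          cases m' with
          | zero => simpa using hj
          | succ m'' => rw [Function.iterate_succ_apply]; exact hall m'' (by omega)
        · rw [Function.iterate_succ_apply]; exact heq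
  intro j
  constructor
  · rintro ⟨hj, m, hall, heq⟩
    have h := forward m j hall heq
    exact Set.mem_Icc.mpr ⟨by omega, h.2⟩
  · intro hjIcc
    rw [Set.mem_Icc] at hjIcc
    obtain ⟨m, hall, heq⟩ := backward (i - j) j rfl (by omega) hjIcc.2
    exact ⟨Set.mem_Icc.mpr ⟨by omega, by omega⟩, m, hall, heq⟩
end

section
/- Let (α, t) be a ranked slice with n ≥ 1 sets and let p, q ∈ Q_t. Then idx(p) < idx(q) if and only if rp(p) ≺ rp(q). -/
universe u

/-- The rank-profile of index `i`: the ranks along the path of the rank tree from the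
root down to `i` (computed by following the parent function `↑` from `i` upwards as
long as the iterates are valid nodes, and reversing). -/
noncomputable def rpIdx (n : ℕ) (α : ℕ → ℕ) (i : ℕ) : List ℕ :=
  ((((List.range (n + 1)).map (fun m => (up n α)^[m] i)).takeWhile
      (fun j => decide (1 ≤ j ∧ j ≤ n))).map α).reverse

/-- The rank-profile of a state `q` of a slice. -/
noncomputable def Slice.rp {Q : Type u} (s : Slice Q) (q : Q) : List ℕ :=
  rpIdx s.n s.rk (s.idx q)

/-- The "better than" order `≺` on rank profiles: compare the common-length prefixes
lexicographically; if they agree, the longer profile is the better (smaller) one. -/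
def lexPrec (a b : List ℕ) : Prop :=
  List.Lex (· < ·) (a.take (min a.length b.length)) (b.take (min a.length b.length)) ∨
  (a.take (min a.length b.length) = b.take (min a.length b.length) ∧
    b.length < a.length)

/-!
Each non-root node `i` satisfies `i < ↑i`, and every index strictly between `i` and `↑i` has
larger rank than `i`; moreover `rp(i) = rp(↑i) ++ [α i]`. For `i < j`, a downward induction on `j`
through its parent shows that either `j` is an ancestor of `i`, so that `rp(j)` is a proper prefix
of `rp(i)`, or the two root paths first part at siblings `u < v`, which satisfy `α u < α v`. In
both cases `rp(i) ≺ rp(j)`; as `≺` is asymmetric, this also gives the converse.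
-/
open List Relation

theorem List.takeWhile_map_iterate_range_succ {β : Type*} (f : β → β) (p : β → Bool) (x : β)
    (N : ℕ) :
    ((range (N + 1)).map (fun m => f^[m] x)).takeWhile p =
      if p x then x :: ((range N).map (fun m => f^[m] (f x))).takeWhile p else [] := by
  rw [range_succ_eq_map, map_cons, map_map]
  split_ifs with hx
  · rw [Function.iterate_zero_apply, takeWhile_cons_of_pos hx]
    rfl
  · exact takeWhile_cons_of_neg hx

def ForksLT {β : Type*} [LT β] (a b : List β) : Prop :=
  ∃ P x y s t, x < y ∧ a = P ++ x :: s ∧ b = P ++ y :: t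

theorem ForksLT.append {β : Type*} [LT β] {a b : List β} (h : ForksLT a b) (l l' : List β) :
    ForksLT (a ++ l) (b ++ l') := by
  obtain ⟨P, x, y, s, t, hxy, rfl, rfl⟩ := h
  exact ⟨P, x, y, s ++ l, t ++ l', hxy, by simp, by simp⟩

theorem lexPrec_of_forksLT {a b : List ℕ} (h : ForksLT a b) : lexPrec a b := by
  obtain ⟨P, x, y, s, t, hxy, rfl, rfl⟩ := h
  left
  obtain ⟨m, hm⟩ : ∃ m, min (P ++ x :: s).length (P ++ y :: t).length = P.length + (m + 1) :=
    ⟨min s.length t.length, by simp⟩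
  simp only [hm, take_append, Nat.add_sub_cancel_left, take_succ_cons]
  rw [take_of_length_le (by omega)]
  exact Lex.append_left _ (Lex.rel hxy) P

theorem lexPrec_append_of_ne_nil (b : List ℕ) {l : List ℕ} (hl : l ≠ []) :
    lexPrec (b ++ l) b := by
  right
  have hmin : min (b ++ l).length b.length = b.length := by simp
  refine ⟨by rw [hmin, take_left' rfl, take_length], ?_⟩
  simpa [length_pos_iff] using hl

theorem lexPrec_irrefl (a : List ℕ) : ¬ lexPrec a a := by
  rintro (h | ⟨-, h⟩)
  · exact lt_irrefl (α := List ℕ) _ h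
  · exact lt_irrefl _ h

theorem lexPrec_asymm {a b : List ℕ} (h : lexPrec a b) : ¬ lexPrec b a := by
  unfold lexPrec at *
  rw [min_comm]
  rintro (h' | ⟨h', h'len⟩) <;> rcases h with h | ⟨h, hlen⟩
  · exact lt_asymm (α := List ℕ) h h'
  · exact lt_irrefl (α := List ℕ) _ (h ▸ h')
  · exact lt_irrefl (α := List ℕ) _ (h' ▸ h)
  · omega

section RankTree

variable {n : ℕ} {α : ℕ → ℕ}

theorem up_spec (hroot : ∀ i, 1 ≤ i → i < n → α n < α i) {i : ℕ} (hi : 1 ≤ i) (hin : i < n) :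
    i < up n α i ∧ up n α i ≤ n ∧ α (up n α i) < α i :=
  Nat.sInf_mem (s := {k | i < k ∧ k ≤ n ∧ α k < α i}) ⟨n, hin, le_rfl, hroot i hi hin⟩

theorem up_le_of_rank_lt {i k : ℕ} (hik : i < k) (hkn : k ≤ n) (hk : α k < α i) :
    up n α i ≤ k :=
  Nat.sInf_le ⟨hik, hkn, hk⟩

theorem up_last : up n α n = 0 :=
  Nat.sInf_eq_zero.2 <| .inr <| Set.eq_empty_of_forall_notMem fun _ ⟨h₁, h₂, _⟩ => by omega

theorem rank_lt_of_lt_of_lt_up (hinj : Set.InjOn α (Set.Icc 1 n)) {i k : ℕ} (hi : 1 ≤ i)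
    (hik : i < k) (hk : k < up n α i) (hkn : k ≤ n) : α i < α k := by
  refine lt_of_le_of_ne (not_lt.1 fun hlt => (up_le_of_rank_lt hik hkn hlt).not_gt hk) ?_
  intro heq
  exact hik.ne (hinj ⟨hi, by omega⟩ ⟨by omega, hkn⟩ heq)

def IsChild (n : ℕ) (α : ℕ → ℕ) (i j : ℕ) : Prop :=
  1 ≤ i ∧ i < n ∧ up n α i = j

noncomputable def upPath (n : ℕ) (α : ℕ → ℕ) (i N : ℕ) : List ℕ :=
  ((List.range N).map (fun m => (up n α)^[m] i)).takeWhile (fun j => decide (1 ≤ j ∧ j ≤ n))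

theorem rpIdx_eq_upPath (i : ℕ) : rpIdx n α i = ((upPath n α i (n + 1)).map α).reverse := rfl

theorem upPath_succ (i N : ℕ) :
    upPath n α i (N + 1) = if 1 ≤ i ∧ i ≤ n then i :: upPath n α (up n α i) N else [] := by
  rw [upPath, List.takeWhile_map_iterate_range_succ]
  simp only [decide_eq_true_eq]
  rfl

theorem upPath_zero (N : ℕ) : upPath n α 0 N = [] := by
  cases N with
  | zero => rfl
  | succ N => rw [upPath_succ, if_neg (by omega)]

/-- The walk leaves `{1, …, n}` through `up n α n = 0`, after which further iterates of `up` may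
re-enter it; `takeWhile` cuts them off, so any step bound above the depth gives the same path. -/
theorem upPath_eq_of_lt (hroot : ∀ i, 1 ≤ i → i < n → α n < α i) {i : ℕ} (hi : 1 ≤ i)
    (hin : i ≤ n) {N M : ℕ} (hN : n - i < N) (hM : n - i < M) :
    upPath n α i N = upPath n α i M := by
  induction hd : n - i using Nat.strong_induction_on generalizing i N M with
  | _ d ih =>
  obtain ⟨N, rfl⟩ := Nat.exists_eq_add_one_of_ne_zero (n := N) (by omega)
  obtain ⟨M, rfl⟩ := Nat.exists_eq_add_one_of_ne_zero (n := M) (by omega)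
  rw [upPath_succ, upPath_succ, if_pos ⟨hi, hin⟩, if_pos ⟨hi, hin⟩]
  rcases hin.lt_or_eq with hin | rfl
  · obtain ⟨hlt, hle, -⟩ := up_spec hroot hi hin
    rw [ih (n - up n α i) (by omega) (by omega) hle (N := N) (M := M) (by omega) (by omega) rfl]
  · rw [up_last, upPath_zero, upPath_zero]

theorem rpIdx_of_lt (hroot : ∀ i, 1 ≤ i → i < n → α n < α i) {i : ℕ} (hi : 1 ≤ i) (hin : i < n) :
    rpIdx n α i = rpIdx n α (up n α i) ++ [α i] := by
  obtain ⟨hlt, hle, -⟩ := up_spec hroot hi hin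
  rw [rpIdx_eq_upPath, upPath_succ, if_pos ⟨hi, hin.le⟩,
    upPath_eq_of_lt hroot (by omega) hle (N := n) (M := n + 1) (by omega) (by omega)]
  simp [rpIdx_eq_upPath]

theorem transGen_isChild_last (hroot : ∀ i, 1 ≤ i → i < n → α n < α i) {i : ℕ} (hi : 1 ≤ i)
    (hin : i < n) : TransGen (IsChild n α) i n := by
  induction hd : n - i using Nat.strong_induction_on generalizing i with
  | _ d ih =>
  obtain ⟨hlt, hle, -⟩ := up_spec hroot hi hin
  rcases hle.lt_or_eq with hupn | hupn
  · exact .head ⟨hi, hin, rfl⟩ (ih (n - up n α i) (by omega) (by omega) hupn rfl)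
  · exact .single ⟨hi, hin, hupn⟩

theorem rank_lt_of_reflTransGen_isChild (hinj : Set.InjOn α (Set.Icc 1 n))
    (hroot : ∀ i, 1 ≤ i → i < n → α n < α i) {i w k : ℕ} (hiw : ReflTransGen (IsChild n α) i w)
    (hik : i ≤ k) (hkw : k < w) : α w < α k := by
  induction hiw generalizing k with
  | refl => omega
  | @tail c v _ hcv ih =>
    obtain ⟨hc, hcn, rfl⟩ := hcv
    obtain ⟨hlt, hle, hrank⟩ := up_spec hroot hc hcn
    rcases lt_trichotomy k c with hkc | rfl | hck
    · exact hrank.trans (ih hik hkc)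
    · exact hrank
    · exact hrank.trans (rank_lt_of_lt_of_lt_up hinj hc hck hkw (by omega))

theorem rpIdx_eq_append_of_reflTransGen (hroot : ∀ i, 1 ≤ i → i < n → α n < α i) {i j : ℕ}
    (hij : ReflTransGen (IsChild n α) i j) : ∃ l, rpIdx n α i = rpIdx n α j ++ l := by
  induction hij using ReflTransGen.head_induction_on with
  | refl => exact ⟨[], (append_nil _).symm⟩
  | @head i c hic _ ih =>
    obtain ⟨hi, hin, rfl⟩ := hic
    obtain ⟨l, hl⟩ := ih
    exact ⟨l ++ [α i], by rw [rpIdx_of_lt hroot hi hin, hl, append_assoc]⟩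

theorem lexPrec_rpIdx_of_transGen (hroot : ∀ i, 1 ≤ i → i < n → α n < α i) {i j : ℕ}
    (hij : TransGen (IsChild n α) i j) : lexPrec (rpIdx n α i) (rpIdx n α j) := by
  obtain ⟨c, ⟨hi, hin, rfl⟩, hcj⟩ := TransGen.head'_iff.1 hij
  obtain ⟨l, hl⟩ := rpIdx_eq_append_of_reflTransGen hroot hcj
  rw [rpIdx_of_lt hroot hi hin, hl, append_assoc]
  exact lexPrec_append_of_ne_nil _ (by simp)

theorem transGen_isChild_or_forksLT (hinj : Set.InjOn α (Set.Icc 1 n))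
    (hroot : ∀ i, 1 ≤ i → i < n → α n < α i) {i j : ℕ} (hi : 1 ≤ i) (hij : i < j) (hjn : j ≤ n) :
    TransGen (IsChild n α) i j ∨ ForksLT (rpIdx n α i) (rpIdx n α j) := by
  induction hd : n - j using Nat.strong_induction_on generalizing j with
  | _ d ih =>
  rcases hjn.eq_or_lt with rfl | hjn
  · exact .inl (transGen_isChild_last hroot hi hij)
  obtain ⟨hjv, hvn, -⟩ := up_spec hroot (hi.trans hij.le) hjn
  rw [rpIdx_of_lt hroot (by omega) hjn]
  rcases ih (n - up n α j) (by omega) (hij.trans hjv) hvn rfl with hiv | hfork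
  · obtain ⟨w, hiw, hw, hwn, hwv⟩ := TransGen.tail'_iff.1 hiv
    obtain ⟨l, hl⟩ := rpIdx_eq_append_of_reflTransGen hroot hiw
    rcases lt_trichotomy w j with hwj | rfl | hjw
    · have hrank : α w < α j := rank_lt_of_lt_of_lt_up hinj hw hwj (hwv ▸ hjv) hjn.le
      right
      refine ⟨rpIdx n α (up n α j), α w, α j, l, [], hrank, ?_, rfl⟩
      rw [hl, rpIdx_of_lt hroot hw hwn, hwv]
      simp
    · exact .inl ((reflTransGen_iff_eq_or_transGen.1 hiw).resolve_left hij.ne')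
    · have hwup : w < up n α j := hwv ▸ (up_spec hroot hw hwn).1
      have h₁ := rank_lt_of_lt_of_lt_up hinj (by omega) hjw hwup hwn.le
      have h₂ := rank_lt_of_reflTransGen_isChild hinj hroot hiw hij.le hjw
      exact absurd h₁ h₂.not_gt
  · right
    simpa using hfork.append [] [α j]

theorem lexPrec_rpIdx_of_lt (hinj : Set.InjOn α (Set.Icc 1 n))
    (hroot : ∀ i, 1 ≤ i → i < n → α n < α i) {i j : ℕ} (hi : 1 ≤ i) (hij : i < j) (hjn : j ≤ n) :
    lexPrec (rpIdx n α i) (rpIdx n α j) :=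
  (transGen_isChild_or_forksLT hinj hroot hi hij hjn).elim (lexPrec_rpIdx_of_transGen hroot)
    lexPrec_of_forksLT

end RankTree

namespace Slice

variable {Q : Type u} {s : Slice Q}

theorem idx_mem_Icc {q : Q} (hq : q ∈ s.states) : 1 ≤ s.idx q ∧ s.idx q ≤ s.n := by
  simp only [states, Set.mem_iUnion, Set.mem_Icc, exists_prop] at hq
  obtain ⟨i, ⟨hi, hin⟩, hqi⟩ := hq
  obtain ⟨h₁, h₂, -⟩ := Nat.sInf_mem (s := {i | 1 ≤ i ∧ i ≤ s.n ∧ q ∈ s.S i}) ⟨i, hi, hin, hqi⟩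
  exact ⟨h₁, h₂⟩

theorem Valid.rk_last_lt (hs : s.Valid) {i : ℕ} (hi : 1 ≤ i) (hin : i < s.n) :
    s.rk s.n < s.rk i := by
  obtain ⟨-, -, hbij, hlast⟩ := hs
  have hne : s.rk i ≠ s.rk s.n := fun h => hin.ne (hbij.injOn ⟨hi, hin.le⟩ ⟨by omega, le_rfl⟩ h)
  have := (hbij.mapsTo ⟨hi, hin.le⟩).1
  rw [hlast (by omega)] at hne ⊢
  omega

end Slice

theorem idx_lt_iff_rp_prec_general {Q : Type u} (s : Slice Q) (hs : s.Valid)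
    (p q : Q) (hp : p ∈ s.states) (hq : q ∈ s.states) :
    s.idx p < s.idx q ↔ lexPrec (s.rp p) (s.rp q) := by
  have key {i j : ℕ} (hi : 1 ≤ i) (hij : i < j) (hjn : j ≤ s.n) :
      lexPrec (rpIdx s.n s.rk i) (rpIdx s.n s.rk j) :=
    lexPrec_rpIdx_of_lt hs.2.2.1.injOn (fun _ => hs.rk_last_lt) hi hij hjn
  obtain ⟨hp₁, hpn⟩ := Slice.idx_mem_Icc hp
  obtain ⟨hq₁, hqn⟩ := Slice.idx_mem_Icc hq
  refine ⟨fun h => key hp₁ h hqn, fun h => ?_⟩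
  rcases lt_trichotomy (s.idx p) (s.idx q) with hlt | heq | hgt
  · exact hlt
  · exact absurd h (by rw [Slice.rp, Slice.rp, heq]; exact lexPrec_irrefl _)
  · exact absurd h (lexPrec_asymm (key hq₁ hgt hpn))

/-- For a ranked slice with `n ≥ 1` sets and states `p, q ∈ Q_t`:
`idx p < idx q` iff `rp p ≺ rp q`. -/
theorem idx_lt_iff_rp_prec {Q : Type u} (s : Slice Q) (hs : s.Valid) (hn : 1 ≤ s.n)
    (p q : Q) (hp : p ∈ s.states) (hq : q ∈ s.states) :
    s.idx p < s.idx q ↔ lexPrec (s.rp p) (s.rp q) :=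
  idx_lt_iff_rp_prec_general s hs p q hp hq
end
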